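/- arXiv:0707.3781 — 2 statements merged into one kernel-verified Lean document; each statement's English description precedes it below -/
import Mathlib

section
/- In the translation T_RC from rational to constrained default logic, every constrained process of T_RC(⟨D,W⟩) containing the special default T_s (with no precondition and no justification and consequence ¬a ∧ ¬b ∧ E ∧ z₁ ∧ … ∧ z_m) generates the extension Cn(W[X/X'] ∧ ¬a ∧ ¬b ∧ E ∧ z₁ ∧ … ∧ z_m). -/
universe u

/-- Semantic propositional formulae over variables `V`. -/
def Form (V : Type u) : Type u := (V → Bool) → Prop

/-- Semantic entailment between formulae. -/
def Entails {V : Type u} (A C : Form V) : Prop := ∀ v, A v → C v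

/-- Satisfaction of a set of formulae by an assignment. -/
def SetSat {V : Type u} (S : Set (Form V)) (v : V → Bool) : Prop := ∀ A ∈ S, A v

/-- Entailment from a set of formulae. -/
def SetEntails {V : Type u} (S : Set (Form V)) (C : Form V) : Prop :=
  ∀ v, SetSat S v → C v

/-- Consistency of a set of formulae. -/
def Consistent {V : Type u} (S : Set (Form V)) : Prop := ∃ v, SetSat S v

/-- A formula does not depend on (does not contain) the variable `a`. -/
def IndepOf {V : Type u} [DecidableEq V] (A : Form V) (a : V) : Prop :=
  ∀ (v : V → Bool) (c : Bool), A (Function.update v a c) ↔ A v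

/-- A formula contains only variables in `X`. -/
def VarsIn {V : Type u} [DecidableEq V] (γ : Form V) (X : Set V) : Prop :=
  ∀ a ∉ X, IndepOf γ a

/-- Var-equivalence with respect to a set of variables `X`. -/
def VarEquiv {V : Type u} [DecidableEq V] (X : Set V) (α β : Form V) : Prop :=
  ∀ γ : Form V, VarsIn γ X → (Entails α γ ↔ Entails β γ)

/-- A default: precondition, justification, consequence. -/
structure Default (V : Type u) where
  prec : Form V
  just : Form V
  cons : Form V

/-- The set of consequences of the defaults in a sequence. -/
def consSet {V : Type u} (Pr : List (Default V)) : Set (Form V) :=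
  {φ | ∃ d ∈ Pr, d.cons = φ}

/-- The set of justifications of the defaults in a sequence. -/
def justSet {V : Type u} (Pr : List (Default V)) : Set (Form V) :=
  {φ | ∃ d ∈ Pr, d.just = φ}

/-- A process of the default theory `⟨D, W⟩`: a sequence of distinct defaults
from `D` with consistent consequences, each precondition entailed by the
background theory together with the consequences of the earlier defaults. -/
def IsProcess {V : Type u} (D : Set (Default V)) (W : Set (Form V))
    (Pr : List (Default V)) : Prop :=
  (∀ d ∈ Pr, d ∈ D) ∧ Pr.Nodup ∧ Consistent (W ∪ consSet Pr) ∧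
    ∀ i : Fin Pr.length, SetEntails (W ∪ consSet (Pr.take i)) (Pr.get i).prec

/-- Global success of a sequence of defaults. -/
def GlobSucc {V : Type u} (W : Set (Form V)) (Pr : List (Default V)) : Prop :=
  Consistent (W ∪ consSet Pr ∪ justSet Pr)

/-- Local success of a sequence of defaults. -/
def LocSucc {V : Type u} (W : Set (Form V)) (Pr : List (Default V)) : Prop :=
  ∀ d ∈ Pr, Consistent (W ∪ consSet Pr ∪ {d.just})

/-- A globally successful process. -/
def GlobSuccProcess {V : Type u} (D : Set (Default V)) (W : Set (Form V))
    (Pr : List (Default V)) : Prop :=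
  IsProcess D W Pr ∧ GlobSucc W Pr

/-- A locally successful process. -/
def LocSuccProcess {V : Type u} (D : Set (Default V)) (W : Set (Form V))
    (Pr : List (Default V)) : Prop :=
  IsProcess D W Pr ∧ LocSucc W Pr

/-- A constrained process: maximal globally successful process. -/
def ConstrainedProcess {V : Type u} (D : Set (Default V)) (W : Set (Form V))
    (Pr : List (Default V)) : Prop :=
  GlobSuccProcess D W Pr ∧
    ∀ d ∈ D, d ∉ Pr → ¬ GlobSuccProcess D W (Pr ++ [d])

/-- A rational process: globally successful process closed under global
applicability. -/
def RationalProcess {V : Type u} (D : Set (Default V)) (W : Set (Form V))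
    (Pr : List (Default V)) : Prop :=
  GlobSuccProcess D W Pr ∧
    ∀ d ∈ D, d ∉ Pr →
      ¬ (SetEntails (W ∪ consSet Pr) d.prec ∧
          Consistent (W ∪ consSet Pr ∪ justSet Pr ∪ {d.just}))

/-- A justified process: maximal locally successful process. -/
def JustifiedProcess {V : Type u} (D : Set (Default V)) (W : Set (Form V))
    (Pr : List (Default V)) : Prop :=
  LocSuccProcess D W Pr ∧
    ∀ d ∈ D, d ∉ Pr → ¬ LocSuccProcess D W (Pr ++ [d])

/-- A Reiter process: locally successful process closed under local
applicability. -/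
def ReiterProcess {V : Type u} (D : Set (Default V)) (W : Set (Form V))
    (Pr : List (Default V)) : Prop :=
  LocSuccProcess D W Pr ∧
    ∀ d ∈ D, d ∉ Pr →
      ¬ (SetEntails (W ∪ consSet Pr) d.prec ∧
          Consistent (W ∪ consSet Pr ∪ {d.just}))

/-- Deductive closure. -/
def Cn {V : Type u} (S : Set (Form V)) : Set (Form V) := {φ | SetEntails S φ}

/-- The extension generated by a process. -/
def ext {V : Type u} (W : Set (Form V)) (Pr : List (Default V)) : Set (Form V) :=
  Cn (W ∪ consSet Pr)

/-- The seminormal translation: conjoin each default's consequence to its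
justification. -/
def TCR {V : Type u} (d : Default V) : Default V :=
  ⟨d.prec, fun v => d.just v ∧ d.cons v, d.cons⟩

variable {X : Type u} {m : ℕ}

/-- The extended alphabet for `T_RC`: the original variables `X`, a disjoint
copy `X'` of `X`, the variables `z₁, …, z_m`, and the variables `a` and `b`. -/
abbrev VRC (X : Type u) (m : ℕ) : Type u := X ⊕ (X ⊕ (Fin m ⊕ Bool))

/-- A formula over `X` read over the extended alphabet. -/
def lift (φ : Form X) : Form (VRC X m) := fun v => φ (fun x => v (Sum.inl x))

/-- The renaming `φ[X/X']` of a formula to the copy `X'` of the alphabet. -/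
def ren (φ : Form X) : Form (VRC X m) :=
  fun v => φ (fun x => v (Sum.inr (Sum.inl x)))

/-- The variable `a`. -/
def aV : Form (VRC X m) := fun v => v (Sum.inr (Sum.inr (Sum.inr true))) = true

/-- The variable `b`. -/
def bV : Form (VRC X m) := fun v => v (Sum.inr (Sum.inr (Sum.inr false))) = true

/-- The variable `z_i`. -/
def zV (i : Fin m) : Form (VRC X m) :=
  fun v => v (Sum.inr (Sum.inr (Sum.inl i))) = true

/-- The translated default `T_e(d_i, i)`. -/
def Te (D : Fin m → Default X) (i : Fin m) : Default (VRC X m) :=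
  ⟨fun v => aV v → lift (D i).prec v,
   fun v => ren (D i).just v ∧ ren (D i).cons v,
   fun v => zV i v ∧ (aV v → lift (D i).cons v) ∧ (bV v → lift (D i).just v)⟩

/-- The translated default `T_n(d_i, i)`. -/
def Tn (D : Fin m → Default X) (i : Fin m) : Default (VRC X m) :=
  ⟨fun v => (aV v → lift (D i).prec v) ∧ (aV v ∧ bV v → ¬ lift (D i).just v),
   fun _ => True,
   fun v => zV i v⟩

/-- The special default `T_g`. -/
def Tg (D : Fin m → Default X) (E : Form X) : Default (VRC X m) :=
  ⟨fun v => ∀ i : Fin m, (aV v → lift (D i).prec v) → zV i v,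
   fun v => aV v ∧ ¬ lift E v,
   fun v => aV v ∧ ¬ bV v ∧ ∀ i : Fin m, zV i v⟩

/-- The special default `T_s`, with no precondition and no justification and
consequence `¬a ∧ ¬b ∧ E ∧ z₁ ∧ … ∧ z_m`. -/
def Ts (E : Form X) : Default (VRC X m) :=
  ⟨fun _ => True,
   fun _ => True,
   fun v => ¬ aV v ∧ ¬ bV v ∧ lift E v ∧ ∀ i : Fin m, zV i v⟩

/-- The set of defaults of the translated theory `T_RC(⟨D, W⟩)`. -/
def DRC (D : Fin m → Default X) (E : Form X) : Set (Default (VRC X m)) :=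
  Set.range (Te D) ∪ Set.range (Tn D) ∪ {Tg D E, Ts E}

/-- The background theory `(a → W) ∧ W[X/X']` of the translated theory. -/
def WRC (W : Form X) : Set (Form (VRC X m)) :=
  {fun v => (aV v → lift W v) ∧ ren W v}

/-! Every default of `T_RC(⟨D, W⟩)` except `T_g` has a consequence entailed by that of `T_s`,
and `T_g` cannot occur next to `T_s` in a process, since their consequences assert `a` and `¬a`.
Moreover `¬a` turns the background theory `(a → W) ∧ W[X/X']` into `W[X/X']`. Hence the
background together with the consequences of the process has exactly the models of
`W[X/X'] ∧ ¬a ∧ ¬b ∧ E ∧ z₁ ∧ … ∧ z_m`. -/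

section Semantics

variable {V : Type u}

theorem setSat_union_iff {S T : Set (Form V)} {v : V → Bool} :
    SetSat (S ∪ T) v ↔ SetSat S v ∧ SetSat T v := by
  simp only [SetSat, Set.mem_union, or_imp, forall_and]

theorem setSat_singleton_iff {φ : Form V} {v : V → Bool} : SetSat {φ} v ↔ φ v :=
  ⟨fun h => h φ rfl, fun h _ hψ => hψ ▸ h⟩

theorem setSat_consSet_iff {Pr : List (Default V)} {v : V → Bool} :
    SetSat (consSet Pr) v ↔ ∀ d ∈ Pr, d.cons v := by
  simp only [SetSat, consSet, Set.mem_ofPred_eq]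
  exact ⟨fun h d hd => h _ ⟨d, hd, rfl⟩, fun h _ ⟨d, hd, hφ⟩ => hφ ▸ h d hd⟩

theorem Cn_eq_Cn_of_setSat_iff {S T : Set (Form V)} (h : ∀ v, SetSat S v ↔ SetSat T v) :
    Cn S = Cn T := by
  ext φ
  exact forall_congr' fun v => imp_congr_left (h v)

theorem Cn_eq_Cn_singleton_of_setSat_iff {S : Set (Form V)} {φ : Form V}
    (h : ∀ v, SetSat S v ↔ φ v) : Cn S = Cn {φ} :=
  Cn_eq_Cn_of_setSat_iff fun v => (h v).trans setSat_singleton_iff.symm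

end Semantics

section Translation

variable {D : Fin m → Default X} {W E : Form X}

theorem entails_Ts_cons_of_mem_DRC {d : Default (VRC X m)} (hd : d ∈ DRC D E)
    (hTg : d ≠ Tg D E) : Entails (Ts E).cons d.cons := by
  rintro v ⟨hna, hnb, hE, hz⟩
  simp only [DRC, Set.mem_union, Set.mem_range, Set.mem_insert_iff,
    Set.mem_singleton_iff] at hd
  rcases hd with (⟨i, rfl⟩ | ⟨i, rfl⟩) | rfl | rfl
  · exact ⟨hz i, fun ha => absurd ha hna, fun hb => absurd hb hnb⟩
  · exact hz i
  · exact absurd rfl hTg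
  · exact ⟨hna, hnb, hE, hz⟩

theorem Tg_notMem_of_Ts_mem {Φ : Set (Form (VRC X m))} {Pr : List (Default (VRC X m))}
    (hcons : Consistent (Φ ∪ consSet Pr)) (hTs : Ts E ∈ Pr) : Tg D E ∉ Pr := by
  intro hTg
  obtain ⟨v, hv⟩ := hcons
  have hPr := setSat_consSet_iff.mp (setSat_union_iff.mp hv).2
  exact (hPr _ hTs).1 (hPr _ hTg).1

theorem setSat_WRC_iff {v : VRC X m → Bool} :
    SetSat (WRC W) v ↔ (aV v → lift W v) ∧ ren W v :=
  setSat_singleton_iff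

theorem setSat_WRC_union_consSet_iff {Pr : List (Default (VRC X m))}
    (hD : ∀ d ∈ Pr, d ∈ DRC D E) (hcons : Consistent (WRC W ∪ consSet Pr))
    (hTs : Ts E ∈ Pr) (v : VRC X m → Bool) :
    SetSat (WRC W ∪ consSet Pr) v ↔ ren W v ∧ (Ts E).cons v := by
  rw [setSat_union_iff, setSat_WRC_iff, setSat_consSet_iff]
  constructor
  · rintro ⟨⟨-, hW⟩, hPr⟩
    exact ⟨hW, hPr _ hTs⟩
  · rintro ⟨hW, hTsv⟩
    refine ⟨⟨fun ha => absurd ha hTsv.1, hW⟩, fun d hd => ?_⟩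
    have hTg : d ≠ Tg D E := fun h => Tg_notMem_of_Ts_mem hcons hTs (h ▸ hd)
    exact entails_Ts_cons_of_mem_DRC (hD d hd) hTg v hTsv

end Translation

/-- In the translation `T_RC` from rational to constrained default logic,
every constrained process of `T_RC(⟨D, W⟩)` containing the special default
`T_s` generates the extension
`Cn(W[X/X'] ∧ ¬a ∧ ¬b ∧ E ∧ z₁ ∧ … ∧ z_m)`. -/
theorem stmt18 (D : Fin m → Default X) (W E : Form X)
    (Pr : List (Default (VRC X m)))
    (hPr : ConstrainedProcess (DRC D E) (WRC W) Pr)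
    (hTs : Ts E ∈ Pr) :
    ext (WRC W) Pr =
      Cn ({fun v => ren W v ∧ ¬ aV v ∧ ¬ bV v ∧ lift E v ∧ ∀ i : Fin m, zV i v} :
        Set (Form (VRC X m))) := by
  obtain ⟨⟨⟨hD, -, hcons, -⟩, -⟩, -⟩ := hPr
  exact Cn_eq_Cn_singleton_of_setSat_iff (setSat_WRC_union_consSet_iff hD hcons hTs)
end

section
/- In the translation T_RC from rational to constrained default logic, every constrained process of the translated theory contains at least one of the two special defaults T_s or T_g; consequently any constrained process not containing T_s contains T_g and generates an extension not var-equivalent to E. -/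
/-!
If a constrained process contains neither `T_s` nor `T_g`, it consists of translated defaults
`T_e`, `T_n` only. Their justifications, like the second conjunct of the background theory,
speak only about the copy `X'`, and their consequences hold as soon as `a` and `b` are false
and every `z_i` is true. So the assignment that keeps a model of the process on `X'`, puts a
model of `E` on `X`, falsifies `a`, `b` and verifies the `z_i` (`tsWitness`) shows that `T_s`
can still be applied, contradicting maximality. Once `T_g` is applied, its justification `¬E`
is consistent with the extension, so the extension does not entail `E`, whereas `E` does.
-/


universe u

variable {X : Type u} {m : ℕ}

section DefaultLogic

variable {V : Type u} {S T : Set (Form V)} {v : V → Bool}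

theorem setSat_union : SetSat (S ∪ T) v ↔ SetSat S v ∧ SetSat T v := by
  simp only [SetSat, Set.mem_union, or_imp, forall_and]

theorem setSat_consSet {Pr : List (Default V)} :
    SetSat (consSet Pr) v ↔ ∀ d ∈ Pr, d.cons v := by
  simp only [SetSat, consSet, Set.mem_ofPred_eq, forall_exists_index, and_imp,
    forall_apply_eq_imp_iff₂]

theorem setSat_justSet {Pr : List (Default V)} :
    SetSat (justSet Pr) v ↔ ∀ d ∈ Pr, d.just v := by
  simp only [SetSat, justSet, Set.mem_ofPred_eq, forall_exists_index, and_imp,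
    forall_apply_eq_imp_iff₂]

theorem Consistent.mono (h : Consistent S) (hTS : T ⊆ S) : Consistent T :=
  let ⟨v, hv⟩ := h
  ⟨v, fun A hA => hv A (hTS hA)⟩

variable {D : Set (Default V)} {W : Set (Form V)} {Pr : List (Default V)} {d : Default V}

theorem IsProcess.append_singleton (hP : IsProcess D W Pr) (hd : d ∈ D) (hdPr : d ∉ Pr)
    (hprec : SetEntails (W ∪ consSet Pr) d.prec)
    (hcons : Consistent (W ∪ consSet (Pr ++ [d]))) : IsProcess D W (Pr ++ [d]) := by
  obtain ⟨hmem, hnd, -, hprecs⟩ := hP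
  refine ⟨List.forall_mem_append.mpr ⟨hmem, List.forall_mem_singleton.mpr hd⟩,
    hnd.append (List.nodup_singleton d) (List.disjoint_singleton.mpr hdPr), hcons, fun i => ?_⟩
  rcases lt_or_eq_of_le (Nat.lt_succ_iff.mp (by simpa using i.isLt)) with hi | hi
  · simpa [List.take_append_of_le_length hi.le, List.getElem_append_left hi] using
      hprecs ⟨i, hi⟩
  · simpa [hi] using hprec

theorem GlobSuccProcess.append_singleton (hP : GlobSuccProcess D W Pr) (hd : d ∈ D)
    (hdPr : d ∉ Pr) (hprec : SetEntails (W ∪ consSet Pr) d.prec)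
    (hsucc : GlobSucc W (Pr ++ [d])) : GlobSuccProcess D W (Pr ++ [d]) :=
  ⟨hP.1.append_singleton hd hdPr hprec (hsucc.mono Set.subset_union_left), hsucc⟩

theorem not_varEquiv_of_sat_of_not_sat [DecidableEq V] {Y : Set V} {α β : Form V}
    (hβ : VarsIn β Y) (hα : α v) (hnβ : ¬ β v) : ¬ VarEquiv Y α β :=
  fun h => hnβ ((h β hβ).mpr (fun _ hw => hw) v hα)

end DefaultLogic

section Translation

theorem varsIn_lift [DecidableEq X] (φ : Form X) :
    VarsIn (lift φ : Form (VRC X m)) (Set.range Sum.inl) := by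
  intro y hy v c
  have hagree : ∀ x : X, Function.update v y c (Sum.inl x) = v (Sum.inl x) :=
    fun x => Function.update_of_ne (fun hx => hy ⟨x, hx⟩) c v
  simp only [lift, hagree]

def tsWitness (v : VRC X m → Bool) (e : X → Bool) : VRC X m → Bool
  | .inl x => e x
  | .inr (.inl x) => v (.inr (.inl x))
  | .inr (.inr (.inl _)) => true
  | .inr (.inr (.inr _)) => false

variable {D : Fin m → Default X} {W E : Form X}

theorem globSucc_append_Ts {Pr : List (Default (VRC X m))}
    (hPr : ∀ d ∈ Pr, d ∈ Set.range (Te D) ∪ Set.range (Tn D)) (hsucc : GlobSucc (WRC W) Pr)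
    {e : X → Bool} (he : E e) : GlobSucc (WRC W) (Pr ++ [Ts E]) := by
  obtain ⟨v, hv⟩ := hsucc
  simp only [setSat_union, setSat_consSet, setSat_justSet] at hv
  obtain ⟨⟨hW, -⟩, hjust⟩ := hv
  refine ⟨tsWitness v e, ?_⟩
  have hnA : ¬ aV (tsWitness v e) := Bool.false_ne_true
  have hnB : ¬ bV (tsWitness v e) := Bool.false_ne_true
  have hz : ∀ i, zV i (tsWitness v e) := fun _ => rfl
  simp only [setSat_union, setSat_consSet, setSat_justSet, List.mem_append,
    List.mem_singleton]
  refine ⟨⟨?_, ?_⟩, ?_⟩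
  · rintro _ rfl
    exact ⟨fun ha => absurd ha hnA, (hW _ rfl).2⟩
  · rintro d (hd | rfl)
    · obtain ⟨i, rfl⟩ | ⟨i, rfl⟩ := hPr d hd
      · exact ⟨hz i, fun ha => absurd ha hnA, fun hb => absurd hb hnB⟩
      · exact hz i
    · exact ⟨hnA, hnB, he, hz⟩
  · rintro d (hd | rfl)
    · obtain ⟨i, rfl⟩ | ⟨i, rfl⟩ := hPr d hd
      · exact hjust _ hd
      · trivial
    · trivial

theorem Ts_mem_or_Tg_mem {Pr : List (Default (VRC X m))} (hE : ∃ e, E e)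
    (hP : ConstrainedProcess (DRC D E) (WRC W) Pr) : Ts E ∈ Pr ∨ Tg D E ∈ Pr := by
  by_contra! ⟨hTs, hTg⟩
  have hTeTn : ∀ d ∈ Pr, d ∈ Set.range (Te D) ∪ Set.range (Tn D) := by
    intro d hd
    rcases hP.1.1.1 d hd with hd' | rfl | rfl
    · exact hd'
    · exact absurd hd hTg
    · exact absurd hd hTs
  have hTsD : Ts E ∈ DRC D E := Or.inr (Or.inr rfl)
  obtain ⟨e, he⟩ := hE
  exact hP.2 _ hTsD hTs <| hP.1.append_singleton hTsD hTs (fun _ _ => trivial)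
    (globSucc_append_Ts hTeTn hP.1.2 he)

end Translation

/-- Every constrained process of the translated theory `T_RC(⟨D, W⟩)` contains
at least one of the special defaults `T_s` or `T_g`; consequently any
constrained process not containing `T_s` contains `T_g` and generates an
extension that is not var-equivalent to `E` (w.r.t. the original variables). -/
theorem stmt19 [DecidableEq X] (D : Fin m → Default X) (W E : Form X)
    (hE : ∃ v, E v) :
    ∀ Pr : List (Default (VRC X m)),
      ConstrainedProcess (DRC D E) (WRC W) Pr →
        (Ts E ∈ Pr ∨ Tg D E ∈ Pr) ∧
        (Ts E ∉ Pr → Tg D E ∈ Pr ∧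
          ¬ VarEquiv (Set.range (Sum.inl : X → VRC X m))
            (fun v => ((aV v → lift W v) ∧ ren W v) ∧ ∀ d ∈ Pr, d.cons v)
            (lift E)) := by
  intro Pr hP
  have hspecial := Ts_mem_or_Tg_mem hE hP
  refine ⟨hspecial, fun hTs => ?_⟩
  have hTg := hspecial.resolve_left hTs
  obtain ⟨v, hv⟩ := hP.1.2
  simp only [setSat_union, setSat_consSet, setSat_justSet] at hv
  obtain ⟨⟨hW, hcons⟩, hjust⟩ := hv
  exact ⟨hTg, not_varEquiv_of_sat_of_not_sat (varsIn_lift E) ⟨hW _ rfl, hcons⟩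
    (hjust _ hTg).2⟩
end
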